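/- arXiv:1008.1737 — 2 statements merged into one kernel-verified Lean document; each statement's English description precedes it below -/
import Mathlib

section
/- Let (R, m, k) be a commutative noetherian local ring of embedding dimension 2 with m³ = 0. Then the following are equivalent: (i) there exists an exact zero divisor in R; (ii) every element of m \ m² is an exact zero divisor in R; (iii) R is Gorenstein. -/
/-!
Write `𝔪` for the maximal ideal and `S = ann 𝔪` for the socle; `𝔪³ = 0` gives `𝔪² ⊆ S`.
As `𝔪/𝔪²` is two-dimensional, `𝔪` is not principal, and by Nakayama any two elements of `𝔪`
independent modulo `𝔪²` generate `𝔪`.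

If `x` is an exact zero divisor with partner `w`, then `x, w ∉ S`. Choosing `t ∈ 𝔪` with
`xt ≠ 0` gives `𝔪 = (w, t)`, and a socle element lies in `ann w = (x)`, so it is `cx` with
`c ∈ 𝔪 = (w, t)`, i.e. a multiple of `xt`: hence `S = (xt)` is simple.

Conversely, if `S` is simple then `S = 𝔪²`, and for `x ∈ 𝔪 \ 𝔪²` one finds `w ∈ 𝔪 \ 𝔪²` with
`xw = 0`. Since `𝔪² ⊆ (w)`, an `a` with `xa = 0` outside `(w)` would give `𝔪 = (w, a)` and
put `x` in `S`; so `ann x = (w)`, and symmetrically `ann w = (x)`.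
-/

/-- The (composition) length of an `R`-module. -/
noncomputable def moduleLength (R : Type u) [CommRing R] (M : Type v)
    [AddCommGroup M] [Module R M] : WithBot ℕ∞ :=
  Order.krullDim (Submodule R M)

/-- The annihilator of an element of `R` as an ideal. -/
def annIdeal (R : Type u) [CommRing R] (a : R) : Ideal R :=
  LinearMap.ker (LinearMap.mulLeft R a)

/-- `x` is an exact zero divisor: `x ≠ 0`, `x` is not a unit, and there is `w`
with `ann(x) = (w)` and `ann(w) = (x)`. -/
def IsExactZeroDivisor (R : Type u) [CommRing R] (x : R) : Prop :=
  x ≠ 0 ∧ ¬ IsUnit x ∧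
    ∃ w, annIdeal R x = Ideal.span {w} ∧ annIdeal R w = Ideal.span {x}

open IsLocalRing Module

lemma moduleLength_eq_one_iff {R : Type u} [CommRing R] {M : Type v} [AddCommGroup M]
    [Module R M] : moduleLength R M = (1 : ℕ∞) ↔ IsSimpleModule R M := by
  rw [moduleLength, isSimpleModule_iff, ← Order.krullDim_eq_one_iff_of_boundedOrder]
  rfl

lemma span_pair_eq_top_of_finrank_eq_two {K V : Type*} [Field K] [AddCommGroup V] [Module K V]
    (h2 : finrank K V = 2) {u v : V} (hu : u ≠ 0) (hv : v ∉ K ∙ u) :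
    Submodule.span K {u, v} = ⊤ := by
  have : FiniteDimensional K V := .of_finrank_pos (by omega)
  have hlt : K ∙ u < Submodule.span K {u, v} :=
    lt_of_le_of_ne (Submodule.span_mono (by simp))
      fun h => hv (h ▸ Submodule.subset_span (by simp))
  have hrank_gt := Submodule.finrank_lt_finrank_of_lt hlt
  rw [finrank_span_singleton hu] at hrank_gt
  have hrank_le := Submodule.finrank_le (Submodule.span K {u, v})
  exact Submodule.eq_top_of_finrank_eq (by omega)

lemma mem_annIdeal {R : Type u} [CommRing R] {x a : R} : a ∈ annIdeal R x ↔ x * a = 0 := Iff.rfl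

lemma span_singleton_eq_of_isAtom {R : Type u} [CommRing R] {I : Ideal R} (hI : IsAtom I) {z : R}
    (hz : z ∈ I) (hz0 : z ≠ 0) : Ideal.span {z} = I :=
  (hI.le_iff.mp ((Ideal.span_singleton_le_iff_mem I).mpr hz)).resolve_left (by simpa using hz0)

section LocalRing

variable {R : Type u} [CommRing R] [IsLocalRing R]

local notation "𝔪" => maximalIdeal R

lemma toCotangent_mem_span_singleton_iff {w a : R} (hw : w ∈ 𝔪) (ha : a ∈ 𝔪) :
    (𝔪).toCotangent ⟨a, ha⟩ ∈ ResidueField R ∙ (𝔪).toCotangent ⟨w, hw⟩ ↔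
      a ∈ Ideal.span {w} ⊔ 𝔪 ^ 2 := by
  rw [← Submodule.restrictScalars_mem R, Submodule.restrictScalars_span R (ResidueField R)
    Ideal.Quotient.mk_surjective, Submodule.mem_span_singleton, Submodule.mem_sup]
  simp_rw [← map_smul, Ideal.toCotangent_eq, Ideal.mem_span_singleton']
  constructor
  · rintro ⟨c, hc⟩
    refine ⟨c * w, ⟨c, rfl⟩, a - c * w, by simpa using neg_mem hc, by ring⟩
  · rintro ⟨_, ⟨c, rfl⟩, z, hz, rfl⟩
    exact ⟨c, by simpa using neg_mem hz⟩

lemma exists_mem_maximalIdeal_notMem_span_sup_sq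
    (hdim : finrank (ResidueField R) (CotangentSpace R) = 2) {w : R} (hw : w ∈ 𝔪) :
    ∃ a ∈ 𝔪, a ∉ Ideal.span {w} ⊔ 𝔪 ^ 2 := by
  have hne : ResidueField R ∙ (𝔪).toCotangent ⟨w, hw⟩ ≠ ⊤ := fun h => by
    have h1 : finrank (ResidueField R) (CotangentSpace R) ≤ 1 := by
      rw [← finrank_top (ResidueField R) (CotangentSpace R), ← h]
      simpa using finrank_span_le_card (R := ResidueField R) {(𝔪).toCotangent ⟨w, hw⟩}
    omega
  obtain ⟨v, -, hv⟩ := SetLike.exists_of_lt hne.lt_top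
  obtain ⟨⟨a, ha⟩, rfl⟩ := (𝔪).toCotangent_surjective v
  exact ⟨a, ha, (toCotangent_mem_span_singleton_iff hw ha).not.mp hv⟩

lemma span_pair_eq_maximalIdeal [IsNoetherianRing R]
    (hdim : finrank (ResidueField R) (CotangentSpace R) = 2) {w a : R} (hw : w ∈ 𝔪)
    (hw2 : w ∉ 𝔪 ^ 2) (ha : a ∈ 𝔪) (haw : a ∉ Ideal.span {w} ⊔ 𝔪 ^ 2) :
    Ideal.span {w, a} = 𝔪 := by
  have htop : Submodule.span (ResidueField R)
      ((𝔪).toCotangent '' {⟨w, hw⟩, ⟨a, ha⟩}) = ⊤ := by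
    rw [Set.image_pair]
    exact span_pair_eq_top_of_finrank_eq_two hdim (by rwa [Ne, Ideal.toCotangent_eq_zero])
      (by rwa [toCotangent_mem_span_singleton_iff])
  rw [CotangentSpace.span_image_eq_top_iff] at htop
  simpa [Submodule.map_span, Set.image_pair] using
    congrArg (Submodule.map (𝔪 : Submodule R R).subtype) htop

variable (R) in
def socle : Ideal R :=
  Submodule.annihilator (maximalIdeal R : Submodule R R)

lemma mem_socle_iff_le_annIdeal {x : R} : x ∈ socle R ↔ 𝔪 ≤ annIdeal R x :=
  Submodule.mem_annihilator

lemma exists_mul_ne_zero_of_notMem_socle {x : R} (hx : x ∉ socle R) :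
    ∃ t ∈ 𝔪, x * t ≠ 0 := by
  simpa [mem_socle_iff_le_annIdeal, SetLike.not_le_iff_exists, mem_annIdeal] using hx

lemma sq_le_socle (h3 : 𝔪 ^ 3 = ⊥) : 𝔪 ^ 2 ≤ socle R := fun z hz =>
  mem_socle_iff_le_annIdeal.mpr fun b hb => mem_annIdeal.mpr <| by
    simpa [h3] using (pow_succ 𝔪 2 ▸ Ideal.mul_mem_mul hz hb : z * b ∈ 𝔪 ^ 3)

lemma sq_le_annIdeal (h3 : 𝔪 ^ 3 = ⊥) {x : R} (hx : x ∈ 𝔪) : 𝔪 ^ 2 ≤ annIdeal R x :=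
  fun z hz => mem_annIdeal.mpr <| by
    rw [mul_comm]; exact mem_socle_iff_le_annIdeal.mp (sq_le_socle h3 hz) hx

lemma mul_mem_sq {a b : R} (ha : a ∈ 𝔪) (hb : b ∈ 𝔪) : a * b ∈ 𝔪 ^ 2 :=
  pow_two 𝔪 ▸ Ideal.mul_mem_mul ha hb

lemma isAtom_span_singleton_of_mem_socle {z : R} (hz : z ∈ socle R) (hz0 : z ≠ 0) :
    IsAtom (Ideal.span {z}) := by
  refine ⟨by simpa using hz0, fun I hI => ?_⟩
  by_contra hI0
  obtain ⟨y, hyI, hy0⟩ := Submodule.exists_mem_ne_zero_of_ne_bot hI0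
  obtain ⟨c, rfl⟩ := Ideal.mem_span_singleton'.mp (hI.le hyI)
  have hc : IsUnit c := notMem_maximalIdeal.mp fun hc =>
    hy0 (by rw [mul_comm]; exact mem_socle_iff_le_annIdeal.mp hz hc)
  exact hI.not_ge ((Ideal.span_singleton_le_iff_mem I).mpr
    ((Ideal.unit_mul_mem_iff_mem I hc).mp hyI))

lemma maximalIdeal_not_le_span_singleton (hdim : finrank (ResidueField R) (CotangentSpace R) = 2)
    {w : R} (hw : w ∈ 𝔪) : ¬ 𝔪 ≤ Ideal.span {w} := fun h => by
  obtain ⟨a, ha, haw⟩ := exists_mem_maximalIdeal_notMem_span_sup_sq hdim hw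
  exact haw (Submodule.mem_sup_left (h ha))

lemma notMem_socle_of_annIdeal_eq (hdim : finrank (ResidueField R) (CotangentSpace R) = 2)
    {x w : R} (hw : w ∈ 𝔪) (hxw : annIdeal R x = Ideal.span {w}) : x ∉ socle R := fun hx =>
  maximalIdeal_not_le_span_singleton hdim hw (hxw ▸ mem_socle_iff_le_annIdeal.mp hx)

lemma annIdeal_eq_span_singleton [IsNoetherianRing R]
    (hdim : finrank (ResidueField R) (CotangentSpace R) = 2) {x w : R} (hx : x ∉ socle R)
    (hw : w ∈ 𝔪) (hw2 : w ∉ 𝔪 ^ 2) (hsq : 𝔪 ^ 2 ≤ Ideal.span {w}) (hxw : x * w = 0) :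
    annIdeal R x = Ideal.span {w} := by
  refine le_antisymm (fun a hxa => ?_) ((Ideal.span_singleton_le_iff_mem _).mpr hxw)
  by_contra haw
  have ha : a ∈ 𝔪 := (mem_maximalIdeal a).mpr fun hu => hx <| by
    rw [hu.mul_left_eq_zero.mp hxa]; exact zero_mem _
  have h𝔪 : Ideal.span {w, a} = 𝔪 :=
    span_pair_eq_maximalIdeal hdim hw hw2 ha (by rwa [sup_eq_left.mpr hsq])
  refine hx (mem_socle_iff_le_annIdeal.mpr (h𝔪 ▸ Ideal.span_le.mpr ?_))
  simp [Set.insert_subset_iff, mem_annIdeal, hxw, mem_annIdeal.mp hxa]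

lemma sq_ne_bot_of_isAtom_socle (hdim : finrank (ResidueField R) (CotangentSpace R) = 2)
    (hS : IsAtom (socle R)) : 𝔪 ^ 2 ≠ ⊥ := fun h0 => by
  have h𝔪S : 𝔪 ≤ socle R := fun x hx => mem_socle_iff_le_annIdeal.mpr fun b hb =>
    mem_annIdeal.mpr (by simpa [h0] using mul_mem_sq hx hb)
  obtain ⟨a, ha, ha2⟩ := exists_mem_maximalIdeal_notMem_span_sup_sq hdim (zero_mem 𝔪)
  have ha0 : a ≠ 0 := fun h => ha2 (by rw [h]; exact zero_mem _)
  exact maximalIdeal_not_le_span_singleton hdim ha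
    (span_singleton_eq_of_isAtom hS (h𝔪S ha) ha0 ▸ h𝔪S)

lemma socle_eq_sq_of_isAtom (hdim : finrank (ResidueField R) (CotangentSpace R) = 2)
    (h3 : 𝔪 ^ 3 = ⊥) (hS : IsAtom (socle R)) : socle R = 𝔪 ^ 2 :=
  ((hS.le_iff.mp (sq_le_socle h3)).resolve_left (sq_ne_bot_of_isAtom_socle hdim hS)).symm

lemma socle_le_span_singleton (h3 : 𝔪 ^ 3 = ⊥) (hS : IsAtom (socle R)) {y : R} (hy : y ∈ 𝔪)
    (hyS : y ∉ socle R) : socle R ≤ Ideal.span {y} := by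
  obtain ⟨t, ht, hyt⟩ := exists_mul_ne_zero_of_notMem_socle hyS
  rw [← span_singleton_eq_of_isAtom hS (sq_le_socle h3 (mul_mem_sq hy ht)) hyt,
    Ideal.span_singleton_le_span_singleton]
  exact dvd_mul_right y t

lemma exists_mul_eq_zero_notMem_sq (hdim : finrank (ResidueField R) (CotangentSpace R) = 2)
    (h3 : 𝔪 ^ 3 = ⊥) (hS : IsAtom (socle R)) {x : R} (hx : x ∈ 𝔪) (hxS : x ∉ socle R) :
    ∃ w ∈ 𝔪, w ∉ 𝔪 ^ 2 ∧ x * w = 0 := by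
  obtain ⟨t, ht, hxt⟩ := exists_mul_ne_zero_of_notMem_socle hxS
  obtain ⟨s, hs, hst⟩ := exists_mem_maximalIdeal_notMem_span_sup_sq hdim ht
  obtain ⟨c, hc⟩ : ∃ c, c * (x * t) = x * s := by
    rw [← Ideal.mem_span_singleton',
      span_singleton_eq_of_isAtom hS (sq_le_socle h3 (mul_mem_sq hx ht)) hxt]
    exact sq_le_socle h3 (mul_mem_sq hx hs)
  refine ⟨s - c * t, sub_mem hs (Ideal.mul_mem_left _ _ ht), fun h => hst ?_, ?_⟩
  · exact Submodule.mem_sup.mpr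
      ⟨c * t, Ideal.mul_mem_left _ _ (Ideal.mem_span_singleton_self t), _, h, by ring⟩
  · linear_combination -hc

theorem isExactZeroDivisor_of_isAtom_socle [IsNoetherianRing R]
    (hdim : finrank (ResidueField R) (CotangentSpace R) = 2) (h3 : 𝔪 ^ 3 = ⊥)
    (hS : IsAtom (socle R)) {x : R} (hx : x ∈ 𝔪) (hx2 : x ∉ 𝔪 ^ 2) :
    IsExactZeroDivisor R x := by
  have hS2 := socle_eq_sq_of_isAtom hdim h3 hS
  have hxS : x ∉ socle R := hS2 ▸ hx2
  obtain ⟨w, hw, hw2, hxw⟩ := exists_mul_eq_zero_notMem_sq hdim h3 hS hx hxS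
  have hwS : w ∉ socle R := hS2 ▸ hw2
  refine ⟨fun h => hx2 (h ▸ zero_mem _), fun h => notMem_maximalIdeal.mpr h hx, w, ?_, ?_⟩
  · exact annIdeal_eq_span_singleton hdim hxS hw hw2
      (hS2 ▸ socle_le_span_singleton h3 hS hw hwS) hxw
  · exact annIdeal_eq_span_singleton hdim hwS hx hx2
      (hS2 ▸ socle_le_span_singleton h3 hS hx hxS) (by rw [mul_comm, hxw])

theorem isAtom_socle_of_isExactZeroDivisor [IsNoetherianRing R]
    (hdim : finrank (ResidueField R) (CotangentSpace R) = 2) (h3 : 𝔪 ^ 3 = ⊥) {x : R}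
    (hx : IsExactZeroDivisor R x) : IsAtom (socle R) := by
  obtain ⟨hx0, hxu, w, hxw, hwx⟩ := hx
  have hx𝔪 : x ∈ 𝔪 := (mem_maximalIdeal x).mpr hxu
  have hw𝔪 : w ∈ 𝔪 := (mem_maximalIdeal w).mpr fun hu =>
    hx0 (hu.mul_right_eq_zero.mp (mem_annIdeal.mp (hwx ▸ Ideal.mem_span_singleton_self x)))
  have hx_w : x * w = 0 := mem_annIdeal.mp (hxw ▸ Ideal.mem_span_singleton_self w)
  have hxS := notMem_socle_of_annIdeal_eq hdim hw𝔪 hxw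
  have hw2 : w ∉ 𝔪 ^ 2 := fun h =>
    notMem_socle_of_annIdeal_eq hdim hx𝔪 hwx (sq_le_socle h3 h)
  obtain ⟨t, ht, hxt⟩ := exists_mul_ne_zero_of_notMem_socle hxS
  have h𝔪 : Ideal.span {w, t} = 𝔪 := by
    refine span_pair_eq_maximalIdeal hdim hw𝔪 hw2 ht fun h => hxt (mem_annIdeal.mp ?_)
    exact sup_le (hxw ▸ le_rfl) (sq_le_annIdeal h3 hx𝔪) h
  suffices h : socle R = Ideal.span {x * t} by
    exact h ▸ isAtom_span_singleton_of_mem_socle (sq_le_socle h3 (mul_mem_sq hx𝔪 ht)) hxt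
  refine le_antisymm (fun s hs => ?_)
    ((Ideal.span_singleton_le_iff_mem _).mpr (sq_le_socle h3 (mul_mem_sq hx𝔪 ht)))
  obtain ⟨c, rfl⟩ : ∃ c, c * x = s := by
    rw [← Ideal.mem_span_singleton', ← hwx, mem_annIdeal, mul_comm]
    exact mem_socle_iff_le_annIdeal.mp hs hw𝔪
  have hc : c ∈ 𝔪 := (mem_maximalIdeal c).mpr fun hu =>
    hxS ((Ideal.unit_mul_mem_iff_mem _ hu).mp hs)
  obtain ⟨α, β, rfl⟩ := Ideal.mem_span_pair.mp (h𝔪 ▸ hc)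
  exact Ideal.mem_span_singleton'.mpr ⟨β, by linear_combination -α * hx_w⟩

end LocalRing

/-- for a commutative noetherian local ring `(R, m, k)` of
embedding dimension `2` with `m³ = 0`, the following are equivalent:
(i) there is an exact zero divisor in `R`;
(ii) every element of `m \ m²` is an exact zero divisor;
(iii) `R` is Gorenstein (for this artinian local ring: the socle `ann(m)` is
one-dimensional over `k`, i.e. has length `1`). -/
theorem stmt8 (R : Type u) [CommRing R] [IsNoetherianRing R] [IsLocalRing R]
    (hdim : Module.finrank (IsLocalRing.ResidueField R) (IsLocalRing.CotangentSpace R) = 2)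
    (h3 : (IsLocalRing.maximalIdeal R) ^ 3 = ⊥) :
    ((∃ x, IsExactZeroDivisor R x) ↔
      (∀ x, x ∈ IsLocalRing.maximalIdeal R → x ∉ (IsLocalRing.maximalIdeal R) ^ 2 →
        IsExactZeroDivisor R x)) ∧
    ((∃ x, IsExactZeroDivisor R x) ↔
      moduleLength R (↥(Submodule.annihilator
        (IsLocalRing.maximalIdeal R : Submodule R R))) = (1 : ℕ∞)) := by
  have i_iii : (∃ x, IsExactZeroDivisor R x) → IsAtom (socle R) :=
    fun ⟨_, hx⟩ => isAtom_socle_of_isExactZeroDivisor hdim h3 hx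
  have iii_ii (hS : IsAtom (socle R)) : ∀ x, x ∈ maximalIdeal R → x ∉ maximalIdeal R ^ 2 →
      IsExactZeroDivisor R x :=
    fun _ hx hx2 => isExactZeroDivisor_of_isAtom_socle hdim h3 hS hx hx2
  have ii_i (h : ∀ x, x ∈ maximalIdeal R → x ∉ maximalIdeal R ^ 2 →
      IsExactZeroDivisor R x) : ∃ x, IsExactZeroDivisor R x := by
    obtain ⟨a, ha, ha2⟩ := exists_mem_maximalIdeal_notMem_span_sup_sq hdim (zero_mem _)
    exact ⟨a, h a ha fun h2 => ha2 (Submodule.mem_sup_right h2)⟩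
  rw [moduleLength_eq_one_iff, isSimpleModule_iff_isAtom]
  exact ⟨⟨fun h => iii_ii (i_iii h), ii_i⟩, ⟨i_iii, fun hS => ii_i (iii_ii hS)⟩⟩
end

section
/- Let F be a field and S = F[x,y,z]/(x², y²z, yz², y³, z³) with maximal ideal n = (x, y, z). Then x is an exact zero divisor in S, and for every element v in n \ ((x) + n²), the annihilator ann(v) is contained in n². -/
open MvPolynomial

set_option synthInstance.maxHeartbeats 1000000
set_option maxHeartbeats 1000000

/-- The ring `S = F[x,y,z]/(x², y²z, yz², y³, z³)`. -/
abbrev S12 (F : Type u) [Field F] : Type u :=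
  MvPolynomial (Fin 3) F ⧸
    (Ideal.span {(X 0 : MvPolynomial (Fin 3) F) ^ 2, X 1 ^ 2 * X 2, X 1 * X 2 ^ 2,
      X 1 ^ 3, X 2 ^ 3})

/-- The maximal ideal `n = (x, y, z)` of `S12 F`. -/
noncomputable def n12 (F : Type u) [Field F] : Ideal (S12 F) :=
  Ideal.span {Ideal.Quotient.mk _ (X 0), Ideal.Quotient.mk _ (X 1),
    Ideal.Quotient.mk _ (X 2)}

/-!
Give `x` weight 3 and `y`, `z` weight 2. Every monomial of the defining ideal `I` has weight at
least 6, while `v ∉ (x) + n²` has a term of weight at most 2 (a constant, or a multiple of `y` or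
`z`). Weighted order is additive on the domain `F[x,y,z]`, so `u * v ∈ I` forces `u` to have
weighted order at least 4; as only `1, x, y, z` have weight below 4, this means `u ∈ n²`.

For the exactness of `x`: in the monomial ideal `I` the variable `x` occurs only through `x²`, so
`(I : x) = (x) + I`, i.e. the annihilator of `x` is `(x)`.
-/

namespace MvPowerSeries

variable {σ R : Type*} [Semiring R] [NoZeroDivisors R]

theorem le_weightedOrder_of_le_weightedOrder_mul {w : σ → ℕ} {f g : MvPowerSeries σ R}
    {j k : ℕ} (hg : g.weightedOrder w ≤ k)
    (h : ((j + k : ℕ) : ℕ∞) ≤ (f * g).weightedOrder w) :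
    j ≤ f.weightedOrder w := by
  rw [weightedOrder_mul] at h
  have hg_top : g.weightedOrder w ≠ ⊤ := ne_top_of_le_ne_top (ENat.natCast_ne_top k) hg
  refine (ENat.add_le_add_iff_right hg_top).mp ?_
  calc (j : ℕ∞) + g.weightedOrder w ≤ j + k := by gcongr
    _ ≤ _ := by exact_mod_cast h

end MvPowerSeries

namespace MvPolynomial

variable {σ R : Type*} [CommSemiring R]

theorem le_weightedOrder_coe_iff (w : σ → ℕ) (p : MvPolynomial σ R) (n : ℕ) :
    (n : ℕ∞) ≤ (p : MvPowerSeries σ R).weightedOrder w ↔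
      ∀ d, Finsupp.weight w d < n → coeff d p = 0 := by
  refine ⟨fun h d hd => ?_, fun h => MvPowerSeries.le_weightedOrder w fun d hd => ?_⟩
  · rw [← coeff_coe]
    exact MvPowerSeries.coeff_eq_zero_of_lt_weightedOrder w
      (lt_of_lt_of_le (by exact_mod_cast hd) h)
  · rw [coeff_coe, h d (by exact_mod_cast hd)]

end MvPolynomial

theorem mem_annIdeal_iff {R : Type u} [CommRing R] {a b : R} : b ∈ annIdeal R a ↔ a * b = 0 :=
  Iff.rfl

namespace S12

open Finsupp (single)

variable {F : Type u} [Field F]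

noncomputable abbrev I12 (F : Type u) [Field F] : Ideal (MvPolynomial (Fin 3) F) :=
  Ideal.span {(X 0 : MvPolynomial (Fin 3) F) ^ 2, X 1 ^ 2 * X 2, X 1 * X 2 ^ 2, X 1 ^ 3, X 2 ^ 3}

theorem degree_fin_three (d : Fin 3 →₀ ℕ) : d.degree = d 0 + d 1 + d 2 := by
  rw [Finsupp.degree_eq_sum, Fin.sum_univ_three]

theorem weight_three_two_two (d : Fin 3 →₀ ℕ) :
    Finsupp.weight ![3, 2, 2] d = 3 * d 0 + 2 * d 1 + 2 * d 2 := by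
  rw [Finsupp.weight_apply, Finsupp.sum_fintype _ _ (by simp), Fin.sum_univ_three]
  simp [mul_comm]

noncomputable def exponents : Set (Fin 3 →₀ ℕ) :=
  {single 0 2, single 1 2 + single 2 1, single 1 1 + single 2 2, single 1 3, single 2 3}

theorem exists_mem_exponents_le_iff (m : Fin 3 →₀ ℕ) :
    (∃ d ∈ exponents, d ≤ m) ↔ 2 ≤ m 0 ∨ 3 ≤ m 1 + m 2 := by
  simp only [exponents, Set.mem_insert_iff, Set.mem_singleton_iff, exists_eq_or_imp,
    exists_eq_left, Finsupp.le_def, Fin.forall_fin_succ, Fin.succ_zero_eq_one,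
    Fin.succ_one_eq_two, IsEmpty.forall_iff, Finsupp.coe_add, Pi.add_apply, Finsupp.single_apply,
    Fin.isValue, Fin.reduceEq, if_true, if_false, and_true]
  omega

theorem I12_eq_span_monomial :
    I12 F = Ideal.span ((fun d => monomial d (1 : F)) '' exponents) := by
  simp only [exponents, Set.image_insert_eq, Set.image_singleton, monomial_add_single,
    ← X_pow_eq_monomial, pow_one]

theorem mem_I12_iff {f : MvPolynomial (Fin 3) F} :
    f ∈ I12 F ↔ ∀ m ∈ f.support, 2 ≤ m 0 ∨ 3 ≤ m 1 + m 2 := by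
  simp only [I12_eq_span_monomial, mem_ideal_span_monomial_image, exists_mem_exponents_le_iff]

theorem mem_span_X_zero_sup_I12_iff {f : MvPolynomial (Fin 3) F} :
    f ∈ Ideal.span {X 0} ⊔ I12 F ↔ ∀ m ∈ f.support, 1 ≤ m 0 ∨ 3 ≤ m 1 + m 2 := by
  have hspan : insert (X 0) ((fun d => monomial d (1 : F)) '' exponents) =
      (fun d => monomial d 1) '' insert (single 0 1) exponents := by
    rw [Set.image_insert_eq]; rfl
  rw [I12_eq_span_monomial, ← Ideal.span_insert, hspan, mem_ideal_span_monomial_image]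
  refine forall₂_congr fun m _ => ?_
  rw [Set.exists_mem_insert, exists_mem_exponents_le_iff, Finsupp.single_le_iff]
  omega

theorem X_zero_mul_mem_I12_iff {f : MvPolynomial (Fin 3) F} :
    X 0 * f ∈ I12 F ↔ f ∈ Ideal.span {X 0} ⊔ I12 F := by
  rw [mem_I12_iff, mem_span_X_zero_sup_I12_iff, support_X_mul, Finset.forall_mem_map]
  refine forall₂_congr fun m _ => ?_
  simp only [addLeftEmbedding_apply, Finsupp.coe_add, Pi.add_apply, Finsupp.single_apply,
    Fin.isValue, Fin.reduceEq, if_true, if_false]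
  omega

theorem six_le_weightedOrder_of_mem_I12 {f : MvPolynomial (Fin 3) F} (hf : f ∈ I12 F) :
    6 ≤ (f : MvPowerSeries (Fin 3) F).weightedOrder ![3, 2, 2] := by
  refine (le_weightedOrder_coe_iff _ f 6).mpr fun d hd => ?_
  by_contra hne
  have := mem_I12_iff.mp hf d (MvPolynomial.mem_support_iff.mpr hne)
  rw [weight_three_two_two] at hd
  omega

theorem mem_sq_of_four_le_weightedOrder {p : MvPolynomial (Fin 3) F}
    (h : 4 ≤ (p : MvPowerSeries (Fin 3) F).weightedOrder ![3, 2, 2]) :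
    p ∈ idealOfVars (Fin 3) F ^ 2 := by
  refine (mem_pow_idealOfVars_iff' _ _).mpr fun d hd => ?_
  refine (le_weightedOrder_coe_iff _ p 4).mp (by exact_mod_cast h) d ?_
  rw [degree_fin_three] at hd
  rw [weight_three_two_two]
  omega

theorem weightedOrder_le_two_of_notMem {r : MvPolynomial (Fin 3) F}
    (hr : r ∉ Ideal.span {X 0} ⊔ idealOfVars (Fin 3) F ^ 2) :
    (r : MvPowerSeries (Fin 3) F).weightedOrder ![3, 2, 2] ≤ 2 := by
  by_contra! h
  have hlow := (le_weightedOrder_coe_iff _ r 3).mp (Order.add_one_le_of_lt h)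
  have hrest : r - C (coeff (single 0 1) r) * X 0 ∈ idealOfVars (Fin 3) F ^ 2 := by
    refine (mem_pow_idealOfVars_iff' _ _).mpr fun d hd => ?_
    rw [degree_fin_three] at hd
    rw [coeff_sub, coeff_C_mul, coeff_X]
    by_cases h0 : d 0 = 0
    · rw [if_neg (fun h => by simp [← h] at h0), hlow d (by rw [weight_three_two_two]; omega)]
      simp
    · have : single 0 1 = d := by ext i; fin_cases i <;> simp <;> omega
      simp [this]
  apply hr
  simpa using Submodule.add_mem_sup
    (Ideal.mul_mem_left _ (C (coeff (single 0 1) r)) (Ideal.mem_span_singleton_self (X 0))) hrest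

theorem mem_sq_of_mul_mem_I12 {p r : MvPolynomial (Fin 3) F}
    (hr : r ∉ Ideal.span {X 0} ⊔ idealOfVars (Fin 3) F ^ 2) (h : p * r ∈ I12 F) :
    p ∈ idealOfVars (Fin 3) F ^ 2 := by
  have h6 := six_le_weightedOrder_of_mem_I12 h
  rw [MvPolynomial.coe_mul] at h6
  exact mem_sq_of_four_le_weightedOrder <| by
    exact_mod_cast MvPowerSeries.le_weightedOrder_of_le_weightedOrder_mul (j := 4) (k := 2)
      (weightedOrder_le_two_of_notMem hr) (by exact_mod_cast h6)

open Ideal.Quotient (mk mk_surjective)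

theorem n12_eq_map : n12 F = (idealOfVars (Fin 3) F).map (mk (I12 F)) := by
  rw [idealOfVars, Ideal.map_span, n12, ← Set.range_comp]
  congr 1
  ext
  simp [Fin.exists_fin_succ, eq_comm]

theorem x_sq : (mk (I12 F) (X 0)) ^ 2 = 0 := by
  rw [← map_pow, Ideal.Quotient.eq_zero_iff_mem]
  exact Ideal.subset_span (by simp)

theorem x_ne_zero : mk (I12 F) (X 0) ≠ 0 := by
  rw [Ne, Ideal.Quotient.eq_zero_iff_mem, mem_I12_iff]
  simp [support_X]

theorem annIdeal_x : annIdeal (S12 F) (mk (I12 F) (X 0)) = Ideal.span {mk (I12 F) (X 0)} := by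
  refine le_antisymm (fun u hu => ?_) ?_
  · obtain ⟨p, rfl⟩ := mk_surjective u
    rw [mem_annIdeal_iff, ← map_mul, Ideal.Quotient.eq_zero_iff_mem, X_zero_mul_mem_I12_iff] at hu
    have := Ideal.mem_map_of_mem (mk (I12 F)) hu
    rwa [Ideal.map_sup, Ideal.map_span, Set.image_singleton, Ideal.map_quotient_self,
      sup_bot_eq] at this
  · rw [Ideal.span_singleton_le_iff_mem, mem_annIdeal_iff, ← sq, x_sq]

theorem isExactZeroDivisor_x : IsExactZeroDivisor (S12 F) (mk (I12 F) (X 0)) := by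
  have := nontrivial_of_ne _ _ (x_ne_zero (F := F))
  exact ⟨x_ne_zero, IsNilpotent.not_isUnit ⟨2, x_sq⟩, _, annIdeal_x, annIdeal_x⟩

theorem annIdeal_le_sq {v : S12 F} (hv : v ∉ Ideal.span {mk (I12 F) (X 0)} + n12 F ^ 2) :
    annIdeal (S12 F) v ≤ n12 F ^ 2 := by
  obtain ⟨r, rfl⟩ := mk_surjective v
  have hr : r ∉ Ideal.span {X 0} ⊔ idealOfVars (Fin 3) F ^ 2 := fun h => hv <| by
    rw [Submodule.add_eq_sup, n12_eq_map, ← Ideal.map_pow, ← Set.image_singleton,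
      ← Ideal.map_span, ← Ideal.map_sup]
    exact Ideal.mem_map_of_mem _ h
  intro u hu
  obtain ⟨p, rfl⟩ := mk_surjective u
  rw [mem_annIdeal_iff, mul_comm, ← map_mul, Ideal.Quotient.eq_zero_iff_mem] at hu
  rw [n12_eq_map, ← Ideal.map_pow]
  exact Ideal.mem_map_of_mem _ (mem_sq_of_mul_mem_I12 hr hu)

end S12

/-- in `S = F[x,y,z]/(x², y²z, yz², y³, z³)` the element `x` is
an exact zero divisor, and for every `v ∈ n \ ((x) + n²)` the annihilator of
`v` is contained in `n²`. -/
theorem stmt12 (F : Type u) [Field F] :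
    IsExactZeroDivisor (S12 F) (Ideal.Quotient.mk _ (X 0)) ∧
    ∀ v : S12 F, v ∈ n12 F →
      v ∉ Ideal.span {(Ideal.Quotient.mk _ (X 0) : S12 F)} + (n12 F) ^ 2 →
      annIdeal (S12 F) v ≤ (n12 F) ^ 2 :=
  ⟨S12.isExactZeroDivisor_x, fun _ _ hv => S12.annIdeal_le_sq hv⟩
end
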